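/- Let p be an odd prime and m = 2p. Define the quadratic form q : Z/m × Z/m → Q/Z by q(i,j) = ij/m mod Z. Then there are exactly four maximal isotropic subgroups of Z/m × Z/m with respect to q, namely H₁ = {(0,j)}, H₂ = {(i,0)}, H₃ = {(2k, pk) : k ∈ Z/m}, H₄ = {(pk, 2k) : k ∈ Z/m}. -/
import Mathlib

/-- The quadratic form q(i,j) = ij/m ∈ ℚ/ℤ on ℤ/m × ℤ/m. -/
def qForm (m : ℕ) (a : ZMod m × ZMod m) : AddCircle (1 : ℚ) :=
  (((a.1 * a.2).val : ℚ) / m : ℚ)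

/-- A subgroup is isotropic if q vanishes on it. -/
def IsIsotropic (m : ℕ) (H : AddSubgroup (ZMod m × ZMod m)) : Prop :=
  ∀ x ∈ H, qForm m x = 0

lemma qForm_eq_zero_iff {m : ℕ} [NeZero m] (a : ZMod m × ZMod m) :
    qForm m a = 0 ↔ a.1 * a.2 = 0 := by
  have hm : 0 < m := Nat.pos_of_ne_zero (NeZero.ne m)
  rw [qForm, AddCircle.coe_eq_zero_iff]
  constructor
  · rintro ⟨n, hn⟩
    rw [zsmul_eq_mul, mul_one] at hn
    have hmq : (m : ℚ) ≠ 0 := by positivity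
    rw [eq_div_iff hmq] at hn
    have hv : (((a.1 * a.2).val : ℕ) : ℤ) = n * m := by exact_mod_cast hn.symm
    have hd : m ∣ (a.1 * a.2).val := by
      have : (m : ℤ) ∣ ((a.1 * a.2).val : ℤ) := ⟨n, by rw [hv]; ring⟩
      exact_mod_cast this
    exact (ZMod.val_eq_zero _).mp (Nat.eq_zero_of_dvd_of_lt hd (ZMod.val_lt _))
  · intro h
    exact ⟨0, by simp [h]⟩

lemma isIsotropic_iff {m : ℕ} [NeZero m] (H : AddSubgroup (ZMod m × ZMod m)) :
    IsIsotropic m H ↔ ∀ x ∈ H, x.1 * x.2 = 0 :=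
  forall₂_congr fun x _ => qForm_eq_zero_iff x

section P

variable {p : ℕ}

/-- the cast hom to `ZMod 2`. -/
noncomputable def pi2 (p : ℕ) : ZMod (2 * p) →+* ZMod 2 :=
  ZMod.castHom (Dvd.intro p rfl) (ZMod 2)

/-- the cast hom to `ZMod p`. -/
noncomputable def pip (p : ℕ) : ZMod (2 * p) →+* ZMod p :=
  ZMod.castHom (Dvd.intro_left 2 rfl) (ZMod p)

lemma crt_zero (hp : p.Prime) (hodd : Odd p) (x : ZMod (2 * p))
    (h2 : pi2 p x = 0) (hpz : pip p x = 0) : x = 0 := by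
  have hcop : Nat.Coprime 2 p := Nat.coprime_two_left.mpr hodd
  let c := ZMod.chineseRemainder hcop
  have hΨ : (pi2 p).prod (pip p) = c.toRingHom := RingHom.ext_zmod _ _
  have : c x = c 0 := by
    have : ((pi2 p).prod (pip p)) x = 0 := Prod.ext h2 hpz
    rw [hΨ] at this
    simpa using this
  exact c.injective this

lemma line {F : Type*} [Field F] (A : AddSubgroup (F × F))
    (h : ∀ x ∈ A, x.1 * x.2 = 0) :
    (∀ x ∈ A, x.1 = 0) ∨ (∀ x ∈ A, x.2 = 0) := by
  by_contra hc
  push_neg at hc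
  obtain ⟨⟨a, haH, ha⟩, ⟨b, hbH, hb⟩⟩ := hc
  have ha2 : a.2 = 0 := by
    rcases mul_eq_zero.mp (h a haH) with h' | h'
    · exact absurd h' ha
    · exact h'
  have hb1 : b.1 = 0 := by
    rcases mul_eq_zero.mp (h b hbH) with h' | h'
    · exact h'
    · exact absurd h' hb
  have := h (a + b) (A.add_mem haH hbH)
  rw [Prod.fst_add, Prod.snd_add, ha2, hb1, add_zero, zero_add] at this
  rcases mul_eq_zero.mp this with h' | h'
  · exact ha h'
  · exact hb h'

lemma card_le_of_line {F : Type*} [Field F] [Finite F] (A : AddSubgroup (F × F))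
    (h : ∀ x ∈ A, x.1 * x.2 = 0) : Nat.card A ≤ Nat.card F := by
  rcases line A h with h' | h'
  · refine Nat.card_le_card_of_injective (fun x : A => (x : F × F).2) ?_
    intro x y hxy
    exact Subtype.ext (Prod.ext (by rw [h' x x.2, h' y y.2]) hxy)
  · refine Nat.card_le_card_of_injective (fun x : A => (x : F × F).1) ?_
    intro x y hxy
    exact Subtype.ext (Prod.ext hxy (by rw [h' x x.2, h' y y.2]))

/-- componentwise cast to `(ZMod 2)²` -/
noncomputable def Phi2 (p : ℕ) : (ZMod (2 * p) × ZMod (2 * p)) →+ ZMod 2 × ZMod 2 :=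
  AddMonoidHom.prodMap (pi2 p).toAddMonoidHom (pi2 p).toAddMonoidHom

noncomputable def Phip (p : ℕ) : (ZMod (2 * p) × ZMod (2 * p)) →+ ZMod p × ZMod p :=
  AddMonoidHom.prodMap (pip p).toAddMonoidHom (pip p).toAddMonoidHom

lemma card_isotropic_le (hp : p.Prime) (hodd : Odd p)
    (H : AddSubgroup (ZMod (2 * p) × ZMod (2 * p)))
    (hiso : ∀ x ∈ H, x.1 * x.2 = 0) : Nat.card H ≤ 2 * p := by
  haveI : NeZero (2 * p) := ⟨by have := hp.pos; omega⟩
  haveI : NeZero p := ⟨hp.ne_zero⟩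
  haveI : Fact p.Prime := ⟨hp⟩
  set A := H.map (Phi2 p) with hA
  set B := H.map (Phip p) with hB
  have hf : Function.Injective (fun x : H =>
      ((⟨Phi2 p x, AddSubgroup.mem_map_of_mem _ x.2⟩ : A),
       (⟨Phip p x, AddSubgroup.mem_map_of_mem _ x.2⟩ : B))) := by
    intro x y hxy
    obtain ⟨h1, h2⟩ := Prod.mk.injEq .. ▸ hxy
    have h1 := Subtype.ext_iff.mp h1
    have h2 := Subtype.ext_iff.mp h2
    have e1 : Phi2 p (x : _) = Phi2 p (y : _) := h1
    have e2 : Phip p (x : _) = Phip p (y : _) := h2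
    have c1 : (x : ZMod (2*p) × ZMod (2*p)).1 = (y : ZMod (2*p) × ZMod (2*p)).1 := by
      have := crt_zero hp hodd ((x : ZMod (2*p) × ZMod (2*p)).1 - (y : ZMod (2*p) × ZMod (2*p)).1)
        (by rw [map_sub, sub_eq_zero]; exact congrArg Prod.fst e1)
        (by rw [map_sub, sub_eq_zero]; exact congrArg Prod.fst e2)
      exact sub_eq_zero.mp this
    have c2 : (x : ZMod (2*p) × ZMod (2*p)).2 = (y : ZMod (2*p) × ZMod (2*p)).2 := by
      have := crt_zero hp hodd ((x : ZMod (2*p) × ZMod (2*p)).2 - (y : ZMod (2*p) × ZMod (2*p)).2)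
        (by rw [map_sub, sub_eq_zero]; exact congrArg Prod.snd e1)
        (by rw [map_sub, sub_eq_zero]; exact congrArg Prod.snd e2)
      exact sub_eq_zero.mp this
    exact Subtype.ext (Prod.ext c1 c2)
  have hcardH : Nat.card H ≤ Nat.card A * Nat.card B := by
    have := Nat.card_le_card_of_injective _ hf
    rwa [Nat.card_prod] at this
  have hcardA : Nat.card A ≤ 2 := by
    have := card_le_of_line A (by
      rintro x ⟨y, hyH, rfl⟩
      show pi2 p y.1 * pi2 p y.2 = 0
      rw [← map_mul, hiso y hyH, map_zero])
    simpa [Nat.card_zmod] using this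
  have hcardB : Nat.card B ≤ p := by
    have := card_le_of_line B (by
      rintro x ⟨y, hyH, rfl⟩
      show pip p y.1 * pip p y.2 = 0
      rw [← map_mul, hiso y hyH, map_zero])
    simpa [Nat.card_zmod] using this
  calc Nat.card H ≤ Nat.card A * Nat.card B := hcardH
    _ ≤ 2 * p := Nat.mul_le_mul hcardA hcardB

end P

section K
variable (p : ℕ)

noncomputable def K1 : AddSubgroup (ZMod (2 * p) × ZMod (2 * p)) :=
  (AddMonoidHom.fst _ _).ker

noncomputable def K2 : AddSubgroup (ZMod (2 * p) × ZMod (2 * p)) :=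
  (AddMonoidHom.snd _ _).ker

noncomputable def K3 : AddSubgroup (ZMod (2 * p) × ZMod (2 * p)) :=
  (((pi2 p).toAddMonoidHom.comp (AddMonoidHom.fst _ _)).prod
   ((pip p).toAddMonoidHom.comp (AddMonoidHom.snd _ _))).ker

noncomputable def K4 : AddSubgroup (ZMod (2 * p) × ZMod (2 * p)) :=
  (((pi2 p).toAddMonoidHom.comp (AddMonoidHom.snd _ _)).prod
   ((pip p).toAddMonoidHom.comp (AddMonoidHom.fst _ _))).ker

variable {p}

lemma mem_K1 {x} : x ∈ K1 p ↔ x.1 = 0 := Iff.rfl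
lemma mem_K2 {x} : x ∈ K2 p ↔ x.2 = 0 := Iff.rfl
lemma mem_K3 {x} : x ∈ K3 p ↔ pi2 p x.1 = 0 ∧ pip p x.2 = 0 := by
  simp [K3, AddMonoidHom.mem_ker, Prod.ext_iff]
lemma mem_K4 {x} : x ∈ K4 p ↔ pi2 p x.2 = 0 ∧ pip p x.1 = 0 := by
  simp [K4, AddMonoidHom.mem_ker, Prod.ext_iff]

lemma iso_K1 : ∀ x ∈ K1 p, x.1 * x.2 = 0 := fun x hx => by
  rw [mem_K1.mp hx, zero_mul]
lemma iso_K2 : ∀ x ∈ K2 p, x.1 * x.2 = 0 := fun x hx => by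
  rw [mem_K2.mp hx, mul_zero]
lemma iso_K3 (hp : p.Prime) (hodd : Odd p) : ∀ x ∈ K3 p, x.1 * x.2 = 0 := fun x hx => by
  obtain ⟨h1, h2⟩ := mem_K3.mp hx
  exact crt_zero hp hodd _ (by rw [map_mul, h1, zero_mul]) (by rw [map_mul, h2, mul_zero])
lemma iso_K4 (hp : p.Prime) (hodd : Odd p) : ∀ x ∈ K4 p, x.1 * x.2 = 0 := fun x hx => by
  obtain ⟨h1, h2⟩ := mem_K4.mp hx
  exact crt_zero hp hodd _ (by rw [map_mul, h1, mul_zero]) (by rw [map_mul, h2, zero_mul])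

lemma g1_mem : ((0 : ZMod (2 * p)), (1 : ZMod (2 * p))) ∈ K1 p := mem_K1.mpr rfl
lemma g2_mem : ((1 : ZMod (2 * p)), (0 : ZMod (2 * p))) ∈ K2 p := mem_K2.mpr rfl
lemma g3_mem : ((2 : ZMod (2 * p)), (p : ZMod (2 * p))) ∈ K3 p := by
  refine mem_K3.mpr ⟨?_, ?_⟩
  · show pi2 p (2 : ZMod (2 * p)) = 0
    rw [map_ofNat]
    decide
  · show pip p ((p : ℕ) : ZMod (2 * p)) = 0
    rw [map_natCast, ZMod.natCast_self]
lemma g4_mem : ((p : ZMod (2 * p)), (2 : ZMod (2 * p))) ∈ K4 p := by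
  refine mem_K4.mpr ⟨?_, ?_⟩
  · show pi2 p (2 : ZMod (2 * p)) = 0
    rw [map_ofNat]; decide
  · show pip p ((p : ℕ) : ZMod (2 * p)) = 0
    rw [map_natCast, ZMod.natCast_self]

lemma card_closure_g1 (hp : p.Prime) (hodd : Odd p) :
    Nat.card (AddSubgroup.closure {((0 : ZMod (2 * p)), (1 : ZMod (2 * p)))}) = 2 * p := by
  haveI : NeZero (2 * p) := ⟨by have := hp.pos; omega⟩
  rw [← AddSubgroup.zmultiples_eq_closure, Nat.card_zmultiples, Prod.addOrderOf]
  simp [ZMod.addOrderOf_one]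

lemma card_closure_g2 (hp : p.Prime) (hodd : Odd p) :
    Nat.card (AddSubgroup.closure {((1 : ZMod (2 * p)), (0 : ZMod (2 * p)))}) = 2 * p := by
  haveI : NeZero (2 * p) := ⟨by have := hp.pos; omega⟩
  rw [← AddSubgroup.zmultiples_eq_closure, Nat.card_zmultiples, Prod.addOrderOf]
  simp [ZMod.addOrderOf_one]

lemma card_closure_g3 (hp : p.Prime) (hodd : Odd p) :
    Nat.card (AddSubgroup.closure {((2 : ZMod (2 * p)), (p : ZMod (2 * p)))}) = 2 * p := by
  have h2p : (2 * p) ≠ 0 := by have := hp.pos; omega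
  rw [← AddSubgroup.zmultiples_eq_closure, Nat.card_zmultiples, Prod.addOrderOf]
  have e2 : (2 : ZMod (2 * p)) = ((2 : ℕ) : ZMod (2 * p)) := by norm_cast
  have o2 : addOrderOf (2 : ZMod (2 * p)) = p := by
    rw [e2, ZMod.addOrderOf_coe _ h2p, Nat.gcd_comm, Nat.gcd_eq_left ⟨p, rfl⟩,
      Nat.mul_div_cancel_left p (by norm_num)]
  have op : addOrderOf ((p : ℕ) : ZMod (2 * p)) = 2 := by
    rw [ZMod.addOrderOf_coe _ h2p, Nat.gcd_comm, Nat.gcd_eq_left ⟨2, mul_comm 2 p⟩,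
      mul_comm 2 p, Nat.mul_div_cancel_left 2 hp.pos]
  show Nat.lcm (addOrderOf (2 : ZMod (2*p))) (addOrderOf ((p:ℕ) : ZMod (2*p))) = 2 * p
  rw [o2, op, Nat.lcm_comm]
  exact Nat.Coprime.lcm_eq_mul (Nat.coprime_two_left.mpr hodd)

lemma card_closure_g4 (hp : p.Prime) (hodd : Odd p) :
    Nat.card (AddSubgroup.closure {((p : ZMod (2 * p)), (2 : ZMod (2 * p)))}) = 2 * p := by
  have h2p : (2 * p) ≠ 0 := by have := hp.pos; omega
  rw [← AddSubgroup.zmultiples_eq_closure, Nat.card_zmultiples, Prod.addOrderOf]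
  have o2 : addOrderOf (2 : ZMod (2 * p)) = p := by
    rw [show (2 : ZMod (2 * p)) = ((2 : ℕ) : ZMod (2 * p)) by norm_cast,
      ZMod.addOrderOf_coe _ h2p, Nat.gcd_comm, Nat.gcd_eq_left ⟨p, rfl⟩,
      Nat.mul_div_cancel_left p (by norm_num)]
  have op : addOrderOf ((p : ℕ) : ZMod (2 * p)) = 2 := by
    rw [ZMod.addOrderOf_coe _ h2p, Nat.gcd_comm, Nat.gcd_eq_left ⟨2, mul_comm 2 p⟩,
      mul_comm 2 p, Nat.mul_div_cancel_left 2 hp.pos]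
  show Nat.lcm (addOrderOf ((p:ℕ) : ZMod (2*p))) (addOrderOf (2 : ZMod (2*p))) = 2 * p
  rw [o2, op]
  exact Nat.Coprime.lcm_eq_mul (Nat.coprime_two_left.mpr hodd)

end K

/-- for p an odd prime and m = 2p, the maximal isotropic subgroups
of ℤ/m × ℤ/m with respect to q(i,j) = ij/m are exactly
H₁ = {(0,j)}, H₂ = {(i,0)}, H₃ = {(2k,pk)}, H₄ = {(pk,2k)}. -/
theorem stmt8 (p : ℕ) (hp : p.Prime) (hodd : Odd p)
    (H : AddSubgroup (ZMod (2 * p) × ZMod (2 * p))) :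
    (IsIsotropic (2 * p) H ∧
      ∀ H' : AddSubgroup (ZMod (2 * p) × ZMod (2 * p)),
        IsIsotropic (2 * p) H' → Nat.card H' ≤ Nat.card H)
    ↔ H ∈ ({AddSubgroup.closure {((0 : ZMod (2 * p)), (1 : ZMod (2 * p)))},
            AddSubgroup.closure {((1 : ZMod (2 * p)), (0 : ZMod (2 * p)))},
            AddSubgroup.closure {((2 : ZMod (2 * p)), (p : ZMod (2 * p)))},
            AddSubgroup.closure {((p : ZMod (2 * p)), (2 : ZMod (2 * p)))}} :
          Set (AddSubgroup (ZMod (2 * p) × ZMod (2 * p)))) := by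
  haveI : NeZero (2 * p) := ⟨by have := hp.pos; omega⟩
  haveI : NeZero p := ⟨hp.ne_zero⟩
  haveI : Fact p.Prime := ⟨hp⟩
  set G1 := AddSubgroup.closure {((0 : ZMod (2 * p)), (1 : ZMod (2 * p)))} with hG1def
  set G2 := AddSubgroup.closure {((1 : ZMod (2 * p)), (0 : ZMod (2 * p)))} with hG2def
  set G3 := AddSubgroup.closure {((2 : ZMod (2 * p)), (p : ZMod (2 * p)))} with hG3def
  set G4 := AddSubgroup.closure {((p : ZMod (2 * p)), (2 : ZMod (2 * p)))} with hG4def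
  have hG1K : G1 ≤ K1 p := (AddSubgroup.closure_le _).mpr (Set.singleton_subset_iff.mpr g1_mem)
  have hG2K : G2 ≤ K2 p := (AddSubgroup.closure_le _).mpr (Set.singleton_subset_iff.mpr g2_mem)
  have hG3K : G3 ≤ K3 p := (AddSubgroup.closure_le _).mpr (Set.singleton_subset_iff.mpr g3_mem)
  have hG4K : G4 ≤ K4 p := (AddSubgroup.closure_le _).mpr (Set.singleton_subset_iff.mpr g4_mem)
  have cardK1 : Nat.card (K1 p) ≤ 2 * p := card_isotropic_le hp hodd _ iso_K1
  have cardK2 : Nat.card (K2 p) ≤ 2 * p := card_isotropic_le hp hodd _ iso_K2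
  have cardK3 : Nat.card (K3 p) ≤ 2 * p := card_isotropic_le hp hodd _ (iso_K3 hp hodd)
  have cardK4 : Nat.card (K4 p) ≤ 2 * p := card_isotropic_le hp hodd _ (iso_K4 hp hodd)
  have hG1 : G1 = K1 p := AddSubgroup.eq_of_le_of_card_ge hG1K
    (by rw [hG1def, card_closure_g1 hp hodd]; exact cardK1)
  have hG2 : G2 = K2 p := AddSubgroup.eq_of_le_of_card_ge hG2K
    (by rw [hG2def, card_closure_g2 hp hodd]; exact cardK2)
  have hG3 : G3 = K3 p := AddSubgroup.eq_of_le_of_card_ge hG3K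
    (by rw [hG3def, card_closure_g3 hp hodd]; exact cardK3)
  have hG4 : G4 = K4 p := AddSubgroup.eq_of_le_of_card_ge hG4K
    (by rw [hG4def, card_closure_g4 hp hodd]; exact cardK4)
  have cardG1 : Nat.card G1 = 2 * p := by rw [hG1def]; exact card_closure_g1 hp hodd
  have cardG2 : Nat.card G2 = 2 * p := by rw [hG2def]; exact card_closure_g2 hp hodd
  have cardG3 : Nat.card G3 = 2 * p := by rw [hG3def]; exact card_closure_g3 hp hodd
  have cardG4 : Nat.card G4 = 2 * p := by rw [hG4def]; exact card_closure_g4 hp hodd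
  constructor
  · rintro ⟨hiso, hmax⟩
    have hiso' := (isIsotropic_iff H).mp hiso
    have hcard_le : Nat.card H ≤ 2 * p := card_isotropic_le hp hodd H hiso'
    have hcard : Nat.card H = 2 * p := by
      refine le_antisymm hcard_le ?_
      have := hmax G1 (by
        rw [isIsotropic_iff]
        exact fun x hx => iso_K1 x (hG1K hx))
      rwa [cardG1] at this
    have hA := line (H.map (Phi2 p)) (by
      rintro x ⟨y, hy, rfl⟩
      show pi2 p y.1 * pi2 p y.2 = 0
      rw [← map_mul, hiso' y hy, map_zero])
    have hB := line (H.map (Phip p)) (by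
      rintro x ⟨y, hy, rfl⟩
      show pip p y.1 * pip p y.2 = 0
      rw [← map_mul, hiso' y hy, map_zero])
    simp only [Set.mem_insert_iff, Set.mem_singleton_iff]
    rcases hA with hA | hA <;> rcases hB with hB | hB
    · -- H ≤ K1
      left
      have hle : H ≤ K1 p := fun x hx => mem_K1.mpr
        (crt_zero hp hodd _ (hA _ (AddSubgroup.mem_map_of_mem _ hx))
          (hB _ (AddSubgroup.mem_map_of_mem _ hx)))
      rw [hG1]
      exact AddSubgroup.eq_of_le_of_card_ge hle (by rw [hcard]; exact cardK1)
    · -- pi2 fst = 0, pip snd = 0 : H ≤ K3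
      right; right; left
      have hle : H ≤ K3 p := fun x hx => mem_K3.mpr
        ⟨hA _ (AddSubgroup.mem_map_of_mem _ hx), hB _ (AddSubgroup.mem_map_of_mem _ hx)⟩
      rw [hG3]
      exact AddSubgroup.eq_of_le_of_card_ge hle (by rw [hcard]; exact cardK3)
    · -- pi2 snd = 0, pip fst = 0 : H ≤ K4
      right; right; right
      have hle : H ≤ K4 p := fun x hx => mem_K4.mpr
        ⟨hA _ (AddSubgroup.mem_map_of_mem _ hx), hB _ (AddSubgroup.mem_map_of_mem _ hx)⟩
      rw [hG4]
      exact AddSubgroup.eq_of_le_of_card_ge hle (by rw [hcard]; exact cardK4)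
    · -- H ≤ K2
      right; left
      have hle : H ≤ K2 p := fun x hx => mem_K2.mpr
        (crt_zero hp hodd _ (hA _ (AddSubgroup.mem_map_of_mem _ hx))
          (hB _ (AddSubgroup.mem_map_of_mem _ hx)))
      rw [hG2]
      exact AddSubgroup.eq_of_le_of_card_ge hle (by rw [hcard]; exact cardK2)
  · intro hmem
    simp only [Set.mem_insert_iff, Set.mem_singleton_iff] at hmem
    have key : ∀ K : AddSubgroup (ZMod (2 * p) × ZMod (2 * p)),
        (∀ x ∈ K, x.1 * x.2 = 0) → H ≤ K → Nat.card H = 2 * p →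
        (IsIsotropic (2 * p) H ∧
          ∀ H' : AddSubgroup (ZMod (2 * p) × ZMod (2 * p)),
            IsIsotropic (2 * p) H' → Nat.card H' ≤ Nat.card H) := by
      intro K hKiso hle hcard
      refine ⟨(isIsotropic_iff H).mpr fun x hx => hKiso x (hle hx), fun H' hH' => ?_⟩
      rw [hcard]
      exact card_isotropic_le hp hodd H' ((isIsotropic_iff H').mp hH')
    rcases hmem with rfl | rfl | rfl | rfl
    · exact key (K1 p) iso_K1 hG1K cardG1
    · exact key (K2 p) iso_K2 hG2K cardG2
    · exact key (K3 p) (iso_K3 hp hodd) hG3K cardG3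
    · exact key (K4 p) (iso_K4 hp hodd) hG4K cardG4
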